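/- Expected indicator bound under Gaussian initialization (Lemma 8 in the appendix): Assume d ≥ 3. Let W(0) = (W₁(0), …, W_m(0)) with W_r(0) i.i.d. N(0, (1/d)I_d), let W be any random element of (ℝ^d)^m with ‖W − W(0)‖₂ ≤ B almost surely, and let X be a random vector in ℝ^d independent of (W, W(0)) such that P(|vᵀX| ≤ ζ) ≤ c₀ζ for every unit vector v ∈ ℝ^d and every ζ > 0. Then E[ (1/m) Σ_{r=1}^m 1{|W_r(0)ᵀX| ≤ ‖W_r − W_r(0)‖₂} ] ≤ c₁ B m^{−1/2}, where c₁ = c₀ · (E_{w ~ N(0,(1/d)I_d)}[ ‖w‖₂^{−2} ])^{1/2}, and this expectation is finite because d ≥ 3. -/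

import Mathlib

noncomputable section

open MeasureTheory ProbabilityTheory Finset

/-- Euclidean space of inputs. -/
abbrev Vec (d : ℕ) := EuclideanSpace ℝ (Fin d)

/-- Weight space of a width-`m` two-layer network (ℓ² norm of the concatenation). -/
abbrev Wt (m d : ℕ) := EuclideanSpace ℝ (Fin m × Fin d)

/-- Preactivation `W_rᵀ x` of neuron `r`. -/
def npre {m d : ℕ} (W : Wt m d) (x : Vec d) (r : Fin m) : ℝ := ∑ i, W (r, i) * x i

/-- Norm `‖W_r − W_r(0)‖₂` of the `r`-th block of `W − W(0)`. -/
def bdiff {m d : ℕ} (W W0 : Wt m d) (r : Fin m) : ℝ :=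
  Real.sqrt (∑ i, (W (r, i) - W0 (r, i)) ^ 2)

/-- The law `N(0, (1/d) I_d)` on `Fin d → ℝ`, as a product of one-dimensional Gaussians. -/
def gaussPi (d : ℕ) : Measure (Fin d → ℝ) :=
  Measure.pi fun _ : Fin d => gaussianReal 0 ((d : NNReal))⁻¹

end

/-!
Fix a neuron `r`. Conditionally on `(W, W(0))` the input `X` keeps its law, so the
anti-concentration hypothesis applied to the unit vector `W_r(0) / ‖W_r(0)‖` bounds the
probability of the event by `c₀ E[‖W_r − W_r(0)‖ / ‖W_r(0)‖]`. Cauchy–Schwarz splits this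
into `(E ‖W_r − W_r(0)‖²)^{1/2} (E ‖W_r(0)‖⁻²)^{1/2}`, and a second Cauchy–Schwarz over `r`
together with `Σ_r ‖W_r − W_r(0)‖² = ‖W − W(0)‖² ≤ B²` gives the factor `√m B`.

The moment `E ‖w‖⁻²` is finite for `d ≥ 3`: by AM–GM on three coordinates,
`‖w‖⁻² ≤ ⅓ ∏_{i<3} |w_i|^{-2/3}`, a product of one-dimensional Gaussian moments
`E |w_i|^{-2/3} < ∞`.
-/

open MeasureTheory ProbabilityTheory Finset
open scoped NNReal RealInnerProductSpace

section GaussianMoment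

lemma gaussianPDF_le (μ : ℝ) (v : ℝ≥0) (x : ℝ) :
    gaussianPDF μ v x ≤ ENNReal.ofReal (√(2 * Real.pi * v))⁻¹ := by
  refine ENNReal.ofReal_le_ofReal ?_
  rw [gaussianPDFReal]
  refine mul_le_of_le_one_right (by positivity) (Real.exp_le_one_iff.2 ?_)
  exact div_nonpos_of_nonpos_of_nonneg (neg_nonpos.2 (sq_nonneg _)) (by positivity)

lemma gaussianReal_le_smul_volume (μ : ℝ) {v : ℝ≥0} (hv : v ≠ 0) :
    gaussianReal μ v ≤ ENNReal.ofReal (√(2 * Real.pi * v))⁻¹ • volume := by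
  rw [gaussianReal_of_var_ne_zero μ hv, ← withDensity_const]
  exact withDensity_mono (ae_of_all _ (gaussianPDF_le μ v))

lemma integrable_abs_rpow_neg_gaussianReal (μ : ℝ) {v : ℝ≥0} (hv : v ≠ 0) {p : ℝ}
    (hp₀ : 0 ≤ p) (hp₁ : p < 1) :
    Integrable (fun x : ℝ => |x| ^ (-p)) (gaussianReal μ v) := by
  have hmeas : Measurable fun x : ℝ => |x| ^ (-p) := by fun_prop
  have hball : IntegrableOn (fun x : ℝ => |x| ^ (-p)) (Metric.ball 0 1) (gaussianReal μ v) := by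
    have h : IntegrableOn (fun x : ℝ => |x| ^ (-p)) (Metric.ball 0 1) volume :=
      integrableOn_ball_of_norm_le_rpow (by simp) (C := 1) (by simpa using hp₁)
        (ae_of_all _ fun x => by simp [abs_of_nonneg, Real.rpow_nonneg])
        hmeas.aestronglyMeasurable
    refine (h.smul_measure (ENNReal.ofReal_ne_top (r := (√(2 * Real.pi * v))⁻¹))).mono_measure ?_
    rw [← Measure.restrict_smul]
    exact Measure.restrict_mono le_rfl (gaussianReal_le_smul_volume μ hv)
  refine (((integrable_indicator_iff measurableSet_ball).2 hball).add
    (integrable_const (1 : ℝ))).mono' hmeas.aestronglyMeasurable (ae_of_all _ fun x => ?_)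
  rw [Real.norm_of_nonneg (by positivity), Pi.add_apply]
  by_cases hx : x ∈ Metric.ball (0 : ℝ) 1
  · simp [Set.indicator_of_mem hx]
  · rw [Set.indicator_of_notMem hx, zero_add]
    simp only [Metric.mem_ball, dist_zero_right, Real.norm_eq_abs, not_lt] at hx
    exact Real.rpow_le_one_of_one_le_of_nonpos hx (neg_nonpos.2 hp₀)

lemma sq_rpow_inv_natCast (x : ℝ) (k : ℕ) : (x ^ 2) ^ ((k : ℝ)⁻¹) = |x| ^ (2 / k : ℝ) := by
  rw [← sq_abs, ← Real.rpow_natCast |x| 2, ← Real.rpow_mul (abs_nonneg x)]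
  norm_num [div_eq_mul_inv]

/-- AM–GM applied to the squares `w i ^ 2`, `i ∈ S`. -/
lemma inv_sum_sq_le_prod_abs_rpow {ι : Type*} [Fintype ι] {S : Finset ι} (hS : S.Nonempty)
    {w : ι → ℝ} (hw : ∀ i ∈ S, w i ≠ 0) :
    (∑ i, w i ^ 2)⁻¹ ≤ (#S : ℝ)⁻¹ * ∏ i ∈ S, |w i| ^ (-(2 / #S : ℝ)) := by
  have hk : (0 : ℝ) < #S := by exact_mod_cast hS.card_pos
  set G := ∏ i ∈ S, (w i ^ 2) ^ ((#S : ℝ)⁻¹)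
  have hG : 0 < G := prod_pos fun i hi => by have := hw i hi; positivity
  have amgm : G ≤ ∑ i ∈ S, (#S : ℝ)⁻¹ * w i ^ 2 :=
    Real.geom_mean_le_arith_mean_weighted S _ _ (fun _ _ => by positivity)
      (by simp [hk.ne']) (fun _ _ => sq_nonneg _)
  have hsub : ∑ i ∈ S, w i ^ 2 ≤ ∑ i, w i ^ 2 :=
    sum_le_sum_of_subset_of_nonneg (subset_univ S) fun _ _ _ => sq_nonneg _
  calc (∑ i, w i ^ 2)⁻¹ ≤ (#S * G)⁻¹ := by
        rw [← mul_sum] at amgm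
        exact inv_anti₀ (by positivity) (((le_inv_mul_iff₀ hk).1 amgm).trans hsub)
    _ = (#S : ℝ)⁻¹ * ∏ i ∈ S, |w i| ^ (-(2 / #S : ℝ)) := by
        rw [mul_inv, ← prod_inv_distrib]
        congr 1
        refine prod_congr rfl fun i _ => ?_
        rw [sq_rpow_inv_natCast, Real.rpow_neg (abs_nonneg _)]

lemma ae_pi_gaussianReal_ne_zero {ι : Type*} [Fintype ι] (μ : ι → ℝ) {v : ι → ℝ≥0}
    (hv : ∀ i, v i ≠ 0) (i : ι) :
    ∀ᵐ w ∂(Measure.pi fun i => gaussianReal (μ i) (v i)), w i ≠ 0 :=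
  (measurePreserving_eval (fun i => gaussianReal (μ i) (v i)) i).quasiMeasurePreserving.ae
    (p := fun x : ℝ => x ≠ 0)
    (measure_eq_zero_iff_ae_notMem.1 (gaussianReal_absolutelyContinuous _ (hv i) (by simp) :
      gaussianReal (μ i) (v i) {0} = 0))

theorem integrable_inv_sum_sq_pi_gaussianReal {ι : Type*} [Fintype ι]
    (hι : 3 ≤ Fintype.card ι) (μ : ι → ℝ) {v : ι → ℝ≥0} (hv : ∀ i, v i ≠ 0) :
    Integrable (fun w : ι → ℝ => (∑ i, w i ^ 2)⁻¹)
      (Measure.pi fun i => gaussianReal (μ i) (v i)) := by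
  classical
  obtain ⟨S, -, hS⟩ := exists_subset_card_eq (s := (univ : Finset ι)) hι
  have hS0 : S.Nonempty := card_pos.1 (by omega)
  set F : ι → ℝ → ℝ := fun i x => if i ∈ S then |x| ^ (-(2 / 3 : ℝ)) else 1
  have hF : ∀ i, Integrable (F i) (gaussianReal (μ i) (v i)) := fun i => by
    by_cases hi : i ∈ S
    · simpa [F, hi] using
        integrable_abs_rpow_neg_gaussianReal (μ i) (hv i) (p := 2 / 3) (by norm_num) (by norm_num)
    · simp [F, hi]
  refine ((Integrable.fintype_prod hF).const_mul (3 : ℝ)⁻¹).mono'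
    (Measurable.aestronglyMeasurable (by fun_prop)) ?_
  filter_upwards [ae_all_iff.2 (ae_pi_gaussianReal_ne_zero μ hv)] with w hw
  rw [Real.norm_of_nonneg (inv_nonneg.2 (by positivity))]
  convert inv_sum_sq_le_prod_abs_rpow hS0 (w := w) fun i _ => hw i using 2
  · simp [hS]
  · simp [F, prod_ite_mem, hS]

lemma gaussPi_var_ne_zero {d : ℕ} (hd : d ≠ 0) : ((d : ℝ≥0))⁻¹ ≠ 0 := by
  simpa using hd

lemma integrable_inv_sum_sq_gaussPi {d : ℕ} (hd : 3 ≤ d) :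
    Integrable (fun w : Fin d → ℝ => (∑ i, w i ^ 2)⁻¹) (gaussPi d) :=
  integrable_inv_sum_sq_pi_gaussianReal (by simpa using hd) _
    fun _ => gaussPi_var_ne_zero (by omega)

end GaussianMoment

section AntiConcentration

variable {E : Type*} [NormedAddCommGroup E] [InnerProductSpace ℝ E] [MeasurableSpace E]

def AntiConcentrated (ν : Measure E) (c₀ : ℝ) : Prop :=
  ∀ v : E, ‖v‖ = 1 → ∀ ζ : ℝ, 0 < ζ → ν {x | |⟪v, x⟫| ≤ ζ} ≤ ENNReal.ofReal (c₀ * ζ)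

lemma AntiConcentrated.measure_abs_inner_le {ν : Measure E} {c₀ : ℝ}
    (h : AntiConcentrated ν c₀) {u : E} (hu : u ≠ 0) {b : ℝ} (hb : 0 ≤ b) :
    ν {x | |⟪u, x⟫| ≤ b} ≤ ENNReal.ofReal (c₀ * (b / ‖u‖)) := by
  have hu' : 0 < ‖u‖ := norm_pos_iff.2 hu
  -- The slab lies in the unit-direction slab of every width `ζ > b / ‖u‖`; letting
  -- `ζ ↓ b / ‖u‖` also covers `b = 0`.
  have hcont : Continuous fun ζ : ℝ => ENNReal.ofReal (c₀ * ζ) :=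
    ENNReal.continuous_ofReal.comp (continuous_const_mul c₀)
  refine ge_of_tendsto (hcont.continuousWithinAt (s := Set.Ioi (b / ‖u‖)) (x := b / ‖u‖))
    (eventually_nhdsWithin_of_forall fun ζ hζ => ?_)
  have hζ0 : 0 < ζ := lt_of_le_of_lt (by positivity) hζ
  refine le_trans (measure_mono fun x hx => ?_)
    (h (‖u‖⁻¹ • u) (by simp [norm_smul, hu'.ne']) ζ hζ0)
  simp only [Set.mem_ofPred_eq, inner_smul_left, abs_mul, RCLike.conj_to_real, abs_inv,
    abs_norm] at hx ⊢
  rw [inv_mul_le_iff₀ hu']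
  exact hx.trans ((div_lt_iff₀' hu').1 hζ).le

variable {Ω : Type*} [MeasurableSpace Ω] {P : Measure Ω}

lemma antiConcentrated_map_iff [OpensMeasurableSpace E] {X : Ω → E} (hX : Measurable X)
    {c₀ : ℝ} : AntiConcentrated (P.map X) c₀ ↔
      ∀ v : E, ‖v‖ = 1 → ∀ ζ : ℝ, 0 < ζ →
        P {ω | |⟪v, X ω⟫| ≤ ζ} ≤ ENNReal.ofReal (c₀ * ζ) := by
  refine forall₃_congr fun v _ ζ => imp_congr_right fun _ => ?_
  rw [Measure.map_apply hX (measurableSet_le (by fun_prop) (by fun_prop))]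
  rfl

lemma integral_mul_le_sqrt_integral_sq_mul_sqrt_integral_sq {f g : Ω → ℝ}
    (hf0 : 0 ≤ᵐ[P] f) (hg0 : 0 ≤ᵐ[P] g) (hf : MemLp f 2 P) (hg : MemLp g 2 P) :
    ∫ ω, f ω * g ω ∂P ≤ √(∫ ω, f ω ^ 2 ∂P) * √(∫ ω, g ω ^ 2 ∂P) := by
  have h := integral_mul_le_Lp_mul_Lq_of_nonneg Real.HolderConjugate.two_two hf0 hg0
    (by rwa [ENNReal.ofReal_ofNat]) (by rwa [ENNReal.ofReal_ofNat])
  simpa only [Real.rpow_two, Real.sqrt_eq_rpow, one_div] using h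

variable [SecondCountableTopology E] [BorelSpace E] [IsFiniteMeasure P]

/-- By independence, `P` of the event is the `(U, β)`-average of the `X`-probability of a slab
of half-width `β / ‖U‖` orthogonal to `U`. -/
lemma measure_abs_inner_le_le_lintegral {U X : Ω → E} {β : Ω → ℝ} {c₀ : ℝ}
    (hU : Measurable U) (hβ : Measurable β) (hX : Measurable X)
    (hindep : IndepFun (fun ω => (U ω, β ω)) X P) (hanti : AntiConcentrated (P.map X) c₀)
    (hU0 : ∀ᵐ ω ∂P, U ω ≠ 0) (hβ0 : ∀ ω, 0 ≤ β ω) :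
    P {ω | |⟪U ω, X ω⟫| ≤ β ω} ≤ ∫⁻ ω, ENNReal.ofReal (c₀ * (β ω / ‖U ω‖)) ∂P := by
  set T : Set ((E × ℝ) × E) := {q | |⟪q.1.1, q.2⟫| ≤ q.1.2}
  have hT : MeasurableSet T := measurableSet_le (by fun_prop) (by fun_prop)
  have hY : Measurable fun ω => (U ω, β ω) := hU.prodMk hβ
  have hlaw := (indepFun_iff_map_prod_eq_prod_map_map hY.aemeasurable hX.aemeasurable).1 hindep
  calc P {ω | |⟪U ω, X ω⟫| ≤ β ω}
      = (P.map fun ω => ((U ω, β ω), X ω)) T := (Measure.map_apply (hY.prodMk hX) hT).symm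
    _ = ∫⁻ ω, P.map X (Prod.mk (U ω, β ω) ⁻¹' T) ∂P := by
        rw [hlaw, Measure.prod_apply hT, lintegral_map (measurable_measure_prodMk_left hT) hY]
    _ ≤ ∫⁻ ω, ENNReal.ofReal (c₀ * (β ω / ‖U ω‖)) ∂P := by
        refine lintegral_mono_ae ?_
        filter_upwards [hU0] with ω hω
        exact hanti.measure_abs_inner_le hω (hβ0 ω)

theorem measureReal_abs_inner_le_le {U X : Ω → E} {β : Ω → ℝ} {c₀ : ℝ} (hc₀ : 0 ≤ c₀)
    (hU : Measurable U) (hβ : Measurable β) (hX : Measurable X)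
    (hindep : IndepFun (fun ω => (U ω, β ω)) X P) (hanti : AntiConcentrated (P.map X) c₀)
    (hU0 : ∀ᵐ ω ∂P, U ω ≠ 0) (hβ0 : ∀ ω, 0 ≤ β ω)
    (hβ2 : MemLp β 2 P) (hU2 : Integrable (fun ω => (‖U ω‖ ^ 2)⁻¹) P) :
    P.real {ω | |⟪U ω, X ω⟫| ≤ β ω}
      ≤ c₀ * (√(∫ ω, β ω ^ 2 ∂P) * √(∫ ω, (‖U ω‖ ^ 2)⁻¹ ∂P)) := by
  have hinv : MemLp (fun ω => ‖U ω‖⁻¹) 2 P :=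
    (memLp_two_iff_integrable_sq (by fun_prop)).2 (by simpa only [inv_pow] using hU2)
  have hprod : Integrable (fun ω => c₀ * (β ω * ‖U ω‖⁻¹)) P :=
    (hβ2.integrable_mul hinv).const_mul c₀
  have hprod0 : ∀ ω, 0 ≤ c₀ * (β ω * ‖U ω‖⁻¹) := fun ω => by have := hβ0 ω; positivity
  calc P.real {ω | |⟪U ω, X ω⟫| ≤ β ω}
      ≤ ∫ ω, c₀ * (β ω * ‖U ω‖⁻¹) ∂P := by
        refine ENNReal.toReal_le_of_le_ofReal (integral_nonneg hprod0) ?_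
        rw [ofReal_integral_eq_lintegral_ofReal hprod (ae_of_all _ hprod0)]
        exact measure_abs_inner_le_le_lintegral hU hβ hX hindep hanti hU0 hβ0
    _ ≤ c₀ * (√(∫ ω, β ω ^ 2 ∂P) * √(∫ ω, (‖U ω‖ ^ 2)⁻¹ ∂P)) := by
        rw [integral_const_mul]
        refine mul_le_mul_of_nonneg_left ?_ hc₀
        simpa only [inv_pow] using integral_mul_le_sqrt_integral_sq_mul_sqrt_integral_sq
          (ae_of_all _ hβ0) (ae_of_all _ fun ω => inv_nonneg.2 (norm_nonneg (U ω))) hβ2 hinv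

end AntiConcentration

section Network

variable {m d : ℕ}

lemma EuclideanSpace.real_inner_eq_sum_mul {ι : Type*} [Fintype ι] (v x : EuclideanSpace ℝ ι) :
    ⟪v, x⟫ = ∑ i, v i * x i := by
  simp [PiLp.inner_apply, mul_comm]

def Wt.block (W : Wt m d) (r : Fin m) : Vec d := WithLp.toLp 2 fun i => W (r, i)

lemma Measurable.block {α : Type*} [MeasurableSpace α] {W : α → Wt m d} (hW : Measurable W)
    (r : Fin m) : Measurable fun a => (W a).block r := by
  unfold Wt.block; fun_prop

lemma Wt.norm_block_sq (W : Wt m d) (r : Fin m) : ‖W.block r‖ ^ 2 = ∑ i, W (r, i) ^ 2 := by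
  simp [Wt.block, EuclideanSpace.norm_sq_eq]

lemma Wt.sum_norm_block_sq (W : Wt m d) : ∑ r, ‖W.block r‖ ^ 2 = ‖W‖ ^ 2 := by
  simp [Wt.block, EuclideanSpace.norm_sq_eq, Fintype.sum_prod_type]

lemma npre_eq_inner (W : Wt m d) (x : Vec d) (r : Fin m) : npre W x r = ⟪W.block r, x⟫ := by
  simp [npre, Wt.block, EuclideanSpace.real_inner_eq_sum_mul]

lemma bdiff_eq_norm_block_sub (W W0 : Wt m d) (r : Fin m) :
    bdiff W W0 r = ‖(W - W0).block r‖ := by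
  rw [← Real.sqrt_sq (norm_nonneg _), Wt.norm_block_sq]
  simp [bdiff]

lemma sum_bdiff_sq (W W0 : Wt m d) : ∑ r, bdiff W W0 r ^ 2 = ‖W - W0‖ ^ 2 := by
  simp only [bdiff_eq_norm_block_sub, Wt.sum_norm_block_sq]

lemma Measurable.bdiff {α : Type*} [MeasurableSpace α] {W W0 : α → Wt m d}
    (hW : Measurable W) (hW0 : Measurable W0) (r : Fin m) :
    Measurable fun a => bdiff (W a) (W0 a) r := by
  simp only [bdiff_eq_norm_block_sub]
  exact ((hW.sub hW0).block r).norm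

lemma bdiff_nonneg (W W0 : Wt m d) (r : Fin m) : 0 ≤ bdiff W W0 r := Real.sqrt_nonneg _

lemma bdiff_le_norm_sub (W W0 : Wt m d) (r : Fin m) : bdiff W W0 r ≤ ‖W - W0‖ := by
  rw [← sq_le_sq₀ (bdiff_nonneg W W0 r) (norm_nonneg _), ← sum_bdiff_sq]
  exact single_le_sum (f := fun r => bdiff W W0 r ^ 2) (fun _ _ => sq_nonneg _) (mem_univ r)

lemma Measurable.npre {α : Type*} [MeasurableSpace α] {W : α → Wt m d} {x : α → Vec d}
    (hW : Measurable W) (hx : Measurable x) (r : Fin m) :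
    Measurable fun a => npre (W a) (x a) r := by
  simp only [npre_eq_inner]
  exact (hW.block r).inner hx

end Network

section Assembly

variable {Ω : Type*} [MeasurableSpace Ω] {P : Measure Ω}

lemma integral_const_mul_sum_ite [IsFiniteMeasure P] {ι : Type*} [Fintype ι] (c : ℝ)
    (p : ι → Ω → Prop)
    [∀ i ω, Decidable (p i ω)] (hp : ∀ i, MeasurableSet {ω | p i ω}) :
    ∫ ω, c * ∑ i, (if p i ω then (1 : ℝ) else 0) ∂P = c * ∑ i, P.real {ω | p i ω} := by
  have hind : ∀ i ω, (if p i ω then (1 : ℝ) else 0) = {ω | p i ω}.indicator 1 ω := fun i ω => by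
    simp [Set.indicator_apply]
  simp only [hind]
  rw [integral_const_mul, integral_finsetSum _ fun i _ => (integrable_const 1).indicator (hp i)]
  simp only [integral_indicator_one (hp _)]

lemma sum_sqrt_integral_sq_le [IsProbabilityMeasure P] {ι : Type*} [Fintype ι] {β : ι → Ω → ℝ} {B : ℝ} (hB : 0 ≤ B)
    (hβ : ∀ i, MemLp (β i) 2 P) (hsum : ∀ᵐ ω ∂P, ∑ i, β i ω ^ 2 ≤ B ^ 2) :
    ∑ i, √(∫ ω, β i ω ^ 2 ∂P) ≤ √(Fintype.card ι) * B := by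
  have hint : ∀ i, Integrable (fun ω => β i ω ^ 2) P := fun i => (hβ i).integrable_sq
  have htotal : ∑ i, ∫ ω, β i ω ^ 2 ∂P ≤ B ^ 2 := by
    rw [← integral_finsetSum _ fun i _ => hint i]
    simpa using integral_mono_ae (integrable_finsetSum _ fun i _ => hint i)
      (integrable_const (B ^ 2)) hsum
  calc ∑ i, √(∫ ω, β i ω ^ 2 ∂P)
      = ∑ i, √(∫ ω, β i ω ^ 2 ∂P) * 1 := by simp
    _ ≤ √(∑ i, √(∫ ω, β i ω ^ 2 ∂P) ^ 2) * √(∑ _i : ι, (1 : ℝ) ^ 2) :=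
        Real.sum_mul_le_sqrt_mul_sqrt _ _ _
    _ ≤ √(B ^ 2) * √(Fintype.card ι) := by
        gcongr
        · simpa [Real.sq_sqrt (integral_nonneg fun ω => sq_nonneg (β _ ω))] using htotal
        · simp
    _ = √(Fintype.card ι) * B := by rw [Real.sqrt_sq hB, mul_comm]

variable {m d : ℕ} {W0 W : Ω → Wt m d} {X : Ω → Vec d}

lemma map_row_eq_gaussPi (hW0 : Measurable W0)
    (hlaw : ∀ p : Fin m × Fin d, P.map (fun ω => W0 ω p) = gaussianReal 0 ((d : ℝ≥0))⁻¹)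
    (hindep : iIndepFun (fun p ω => W0 ω p) P) (r : Fin m) :
    P.map (fun ω i => W0 ω (r, i)) = gaussPi d := by
  rw [(hindep.precomp (Prod.mk_right_injective r)).map_fun_eq_pi_map
    fun i => (by fun_prop : Measurable fun ω => W0 ω (r, i)).aemeasurable]
  simp only [hlaw]
  rfl

lemma memLp_bdiff [IsFiniteMeasure P] {B : ℝ} (hW : Measurable W) (hW0 : Measurable W0)
    (hclose : ∀ᵐ ω ∂P, ‖W ω - W0 ω‖ ≤ B) (r : Fin m) :
    MemLp (fun ω => bdiff (W ω) (W0 ω) r) 2 P :=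
  MemLp.of_bound (hW.bdiff hW0 r).aestronglyMeasurable B <| by
    filter_upwards [hclose] with ω hω
    rw [Real.norm_of_nonneg (bdiff_nonneg _ _ r)]
    exact (bdiff_le_norm_sub _ _ r).trans hω

lemma sum_sqrt_integral_bdiff_sq_le [IsProbabilityMeasure P] {B : ℝ} (hB : 0 ≤ B) (hW : Measurable W)
    (hW0 : Measurable W0) (hclose : ∀ᵐ ω ∂P, ‖W ω - W0 ω‖ ≤ B) :
    ∑ r, √(∫ ω, bdiff (W ω) (W0 ω) r ^ 2 ∂P) ≤ √m * B := by
  have hsum : ∀ᵐ ω ∂P, ∑ r, bdiff (W ω) (W0 ω) r ^ 2 ≤ B ^ 2 := by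
    filter_upwards [hclose] with ω hω
    rw [sum_bdiff_sq]
    exact pow_le_pow_left₀ (norm_nonneg _) hω 2
  simpa using sum_sqrt_integral_sq_le hB (memLp_bdiff hW hW0 hclose) hsum

theorem measureReal_abs_npre_le [IsFiniteMeasure P] (hd : 3 ≤ d) {c₀ : ℝ} (hc₀ : 0 ≤ c₀)
    (hW0 : Measurable W0) (hW : Measurable W) (hX : Measurable X) (r : Fin m)
    (hlaw : P.map (fun ω i => W0 ω (r, i)) = gaussPi d)
    (hindep : IndepFun (fun ω => (W ω, W0 ω)) X P) (hanti : AntiConcentrated (P.map X) c₀)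
    (hβ2 : MemLp (fun ω => bdiff (W ω) (W0 ω) r) 2 P) :
    P.real {ω | |npre (W0 ω) (X ω) r| ≤ bdiff (W ω) (W0 ω) r}
      ≤ c₀ * (√(∫ ω, bdiff (W ω) (W0 ω) r ^ 2 ∂P)
        * √(∫ w, (∑ i, w i ^ 2)⁻¹ ∂gaussPi d)) := by
  have hY : Measurable fun ω i => W0 ω (r, i) := by fun_prop
  have hf : Measurable fun w : Fin d → ℝ => (∑ i, w i ^ 2)⁻¹ := by fun_prop
  have hnorm : ∀ ω, (‖(W0 ω).block r‖ ^ 2)⁻¹ = (∑ i, W0 ω (r, i) ^ 2)⁻¹ := fun ω => by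
    rw [Wt.norm_block_sq]
  have hU2 : Integrable (fun ω => (‖(W0 ω).block r‖ ^ 2)⁻¹) P := by
    simp only [hnorm]
    exact (integrable_map_measure hf.aestronglyMeasurable hY.aemeasurable).1
      (hlaw ▸ integrable_inv_sum_sq_gaussPi hd)
  have hK : ∫ ω, (‖(W0 ω).block r‖ ^ 2)⁻¹ ∂P = ∫ w, (∑ i, w i ^ 2)⁻¹ ∂gaussPi d := by
    simp only [hnorm]
    rw [← hlaw, integral_map hY.aemeasurable hf.aestronglyMeasurable]
  have hU0 : ∀ᵐ ω ∂P, (W0 ω).block r ≠ 0 := by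
    have hcoord := ae_pi_gaussianReal_ne_zero (fun _ : Fin d => (0 : ℝ))
      (fun _ => gaussPi_var_ne_zero (d := d) (by omega)) ⟨0, by omega⟩
    rw [← gaussPi, ← hlaw] at hcoord
    filter_upwards [ae_of_ae_map hY.aemeasurable hcoord] with ω hω h0
    exact hω (congrArg (fun v : Vec d => v ⟨0, by omega⟩) h0)
  have hUβ : IndepFun (fun ω => ((W0 ω).block r, bdiff (W ω) (W0 ω) r)) X P :=
    hindep.comp (φ := fun p => (p.2.block r, bdiff p.1 p.2 r)) (ψ := id)
      ((measurable_snd.block r).prodMk (measurable_fst.bdiff measurable_snd r)) measurable_id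
  have key := measureReal_abs_inner_le_le hc₀ (hW0.block r) (hW.bdiff hW0 r) hX hUβ hanti hU0
    (fun ω => bdiff_nonneg _ _ r) hβ2 hU2
  simpa only [npre_eq_inner, hK] using key

end Assembly

theorem stmt_5_general
    {m d : ℕ} (hd : 3 ≤ d)
    (B : ℝ) (hB : 0 < B) (c₀ : ℝ) (hc₀ : 0 < c₀)
    {Ω : Type*} [MeasurableSpace Ω] (P : Measure Ω) [IsProbabilityMeasure P]
    (W0 W : Ω → Wt m d) (X : Ω → Vec d)
    (hW0meas : Measurable W0) (hWmeas : Measurable W) (hXmeas : Measurable X)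
    (hW0law : ∀ p : Fin m × Fin d,
      Measure.map (fun ω => W0 ω p) P = gaussianReal 0 ((d : NNReal))⁻¹)
    (hW0indep : iIndepFun (m := fun _ : Fin m × Fin d => (inferInstance : MeasurableSpace ℝ))
      (fun p ω => W0 ω p) P)
    (hWclose : ∀ᵐ ω ∂P, ‖W ω - W0 ω‖ ≤ B)
    (hXindep : IndepFun (fun ω => (W ω, W0 ω)) X P)
    (hXanti : ∀ v : Vec d, ‖v‖ = 1 → ∀ ζ : ℝ, 0 < ζ →
      P {ω | |∑ i, v i * X ω i| ≤ ζ} ≤ ENNReal.ofReal (c₀ * ζ)) :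
    Integrable (fun w : Fin d → ℝ => (∑ i, w i ^ 2)⁻¹) (gaussPi d)
    ∧ ∫ ω, ((m : ℝ)⁻¹ *
          ∑ r, if |npre (W0 ω) (X ω) r| ≤ bdiff (W ω) (W0 ω) r then (1 : ℝ) else 0) ∂P
        ≤ (c₀ * Real.sqrt (∫ w, (∑ i, w i ^ 2)⁻¹ ∂gaussPi d)) * B * (Real.sqrt m)⁻¹ := by
  have hanti : AntiConcentrated (P.map X) c₀ := (antiConcentrated_map_iff hXmeas).2
    fun v hv ζ hζ => by simpa only [EuclideanSpace.real_inner_eq_sum_mul] using hXanti v hv ζ hζ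
  set K := ∫ w, (∑ i, w i ^ 2)⁻¹ ∂gaussPi d
  refine ⟨integrable_inv_sum_sq_gaussPi hd, ?_⟩
  calc _ = (m : ℝ)⁻¹ * ∑ r, P.real {ω | |npre (W0 ω) (X ω) r| ≤ bdiff (W ω) (W0 ω) r} :=
        integral_const_mul_sum_ite _ _ fun r =>
          measurableSet_le (hW0meas.npre hXmeas r).abs (hWmeas.bdiff hW0meas r)
    _ ≤ (m : ℝ)⁻¹ * ∑ r, c₀ * (√(∫ ω, bdiff (W ω) (W0 ω) r ^ 2 ∂P) * √K) := by
        gcongr with r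
        exact measureReal_abs_npre_le hd hc₀.le hW0meas hWmeas hXmeas r
          (map_row_eq_gaussPi hW0meas hW0law hW0indep r) hXindep hanti
          (memLp_bdiff hWmeas hW0meas hWclose r)
    _ = (m : ℝ)⁻¹ * (c₀ * √K) * ∑ r, √(∫ ω, bdiff (W ω) (W0 ω) r ^ 2 ∂P) := by
        rw [← mul_sum, ← sum_mul]
        ring
    _ ≤ (m : ℝ)⁻¹ * (c₀ * √K) * (√m * B) := by
        gcongr
        exact sum_sqrt_integral_bdiff_sq_le hB.le hWmeas hW0meas hWclose
    _ = c₀ * √K * B * (√m)⁻¹ := by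
        rw [← one_div (√(m : ℝ)), ← Real.sqrt_div_self']
        ring

/-- Expected indicator bound under Gaussian initialization (Lemma 8): if `d ≥ 3`,
`W(0)` has i.i.d. `N(0, (1/d) I_d)` blocks, `‖W − W(0)‖ ≤ B` a.s., and `X` is
independent of `(W, W(0))` with `P(|vᵀX| ≤ ζ) ≤ c₀ζ` for unit vectors `v`, then
`E[(1/m) Σ_r 1{|W_r(0)ᵀX| ≤ ‖W_r − W_r(0)‖}] ≤ c₁ B m^{−1/2}` where
`c₁ = c₀ (E_{w∼N(0,(1/d)I)}[‖w‖⁻²])^{1/2}`, the latter expectation being finite. -/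
theorem stmt_5
    {m d : ℕ} (hm : 0 < m) (hd : 3 ≤ d)
    (B : ℝ) (hB : 0 < B) (c₀ : ℝ) (hc₀ : 0 < c₀)
    {Ω : Type*} [MeasurableSpace Ω] (P : Measure Ω) [IsProbabilityMeasure P]
    (W0 W : Ω → Wt m d) (X : Ω → Vec d)
    (hW0meas : Measurable W0) (hWmeas : Measurable W) (hXmeas : Measurable X)
    (hW0law : ∀ p : Fin m × Fin d,
      Measure.map (fun ω => W0 ω p) P = gaussianReal 0 ((d : NNReal))⁻¹)
    (hW0indep : iIndepFun (m := fun _ : Fin m × Fin d => (inferInstance : MeasurableSpace ℝ))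
      (fun p ω => W0 ω p) P)
    (hWclose : ∀ᵐ ω ∂P, ‖W ω - W0 ω‖ ≤ B)
    (hXindep : IndepFun (fun ω => (W ω, W0 ω)) X P)
    (hXanti : ∀ v : Vec d, ‖v‖ = 1 → ∀ ζ : ℝ, 0 < ζ →
      P {ω | |∑ i, v i * X ω i| ≤ ζ} ≤ ENNReal.ofReal (c₀ * ζ)) :
    Integrable (fun w : Fin d → ℝ => (∑ i, w i ^ 2)⁻¹) (gaussPi d)
    ∧ ∫ ω, ((m : ℝ)⁻¹ *
          ∑ r, if |npre (W0 ω) (X ω) r| ≤ bdiff (W ω) (W0 ω) r then (1 : ℝ) else 0) ∂P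
        ≤ (c₀ * Real.sqrt (∫ w, (∑ i, w i ^ 2)⁻¹ ∂gaussPi d)) * B * (Real.sqrt m)⁻¹ :=
  stmt_5_general hd B hB c₀ hc₀ P W0 W X hW0meas hWmeas hXmeas hW0law hW0indep hWclose hXindep
    hXanti
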